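/- arXiv:2209.11817 — 2 statements merged into one kernel-verified Lean document; each statement's English description precedes it below -/
import Mathlib

section
/- Let μ*, μ̂ ∈ [0,1], n ≥ 1 a positive integer, and C > 0. If |(1 − μ̂) − (1 − μ*)| ≤ √(3(1 − μ*)C/n) + 3C/n, then |μ̂ − μ*| ≤ √(12(1 − μ̂)C/n) + 12C/n. -/
/-!
Write `a = 1 - μ*`, `b = 1 - μ̂`, `t = C / n`, `s = √(3at)` and `u = √(12bt)`.
Multiplying `a - b ≤ s + 3t` by `3t` gives `s² ≤ u²/4 + 3ts + 9t²`, a quadratic inequality in `s`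
whose solution is `s ≤ u/2 + 11t/2`. Hence `|b - a| ≤ s + 3t ≤ u/2 + 17t/2 ≤ u + 12t`.
-/

theorem le_add_of_sq_le_sq_add {s v t : ℝ} (hs : 0 ≤ s) (hv : 0 ≤ v) (ht : 0 ≤ t)
    (h : s ^ 2 ≤ v ^ 2 + 3 * t * s + 9 * t ^ 2) : s ≤ v + 11 / 2 * t := by
  by_contra! hlt
  nlinarith [mul_nonneg hv ht]

theorem abs_sub_le_sqrt_add_of_abs_sub_le_sqrt_add {a b t : ℝ} (ha : 0 ≤ a) (ht : 0 ≤ t)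
    (h : |b - a| ≤ √(3 * a * t) + 3 * t) : |b - a| ≤ √(12 * b * t) + 12 * t := by
  set s := √(3 * a * t)
  set u := √(12 * b * t)
  have hs : s ^ 2 = 3 * a * t := Real.sq_sqrt (by positivity)
  have hu : 12 * b * t ≤ u ^ 2 := Real.sq_sqrt' (x := 12 * b * t) ▸ le_max_left _ _
  have hab : a - b ≤ s + 3 * t := by linarith [neg_le_abs (b - a)]
  have hsu : s ≤ u / 2 + 11 / 2 * t :=
    le_add_of_sq_le_sq_add (Real.sqrt_nonneg _) (by positivity) ht (by nlinarith)
  calc |b - a| ≤ s + 3 * t := h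
    _ ≤ u + 12 * t := by linarith [Real.sqrt_nonneg (12 * b * t)]

theorem stmt_5_general (μs μh : ℝ) (hμs : μs ∈ Set.Icc (0:ℝ) 1)
    (n : ℕ) (C : ℝ) (hC : 0 < C)
    (h : |(1 - μh) - (1 - μs)| ≤ Real.sqrt (3 * (1 - μs) * C / n) + 3 * C / n) :
    |μh - μs| ≤ Real.sqrt (12 * (1 - μh) * C / n) + 12 * C / n := by
  simp only [mul_div_assoc] at h ⊢
  have key := abs_sub_le_sqrt_add_of_abs_sub_le_sqrt_add (sub_nonneg.2 hμs.2)
    (by positivity) h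
  rwa [abs_sub_comm, sub_sub_sub_cancel_left] at key

theorem stmt_5 (μs μh : ℝ) (hμs : μs ∈ Set.Icc (0:ℝ) 1) (hμh : μh ∈ Set.Icc (0:ℝ) 1)
    (n : ℕ) (hn : 1 ≤ n) (C : ℝ) (hC : 0 < C)
    (h : |(1 - μh) - (1 - μs)| ≤ Real.sqrt (3 * (1 - μs) * C / n) + 3 * C / n) :
    |μh - μs| ≤ Real.sqrt (12 * (1 - μh) * C / n) + 12 * C / n :=
  stmt_5_general μs μh hμs n C hC h
end

section
/- For reals a_1,…,a_N ∈ (0,1] and b_1,…,b_N ∈ ℝ, (∏_{j=1}^N a_j) · |∑_{j=1}^N b_j/a_j| ≤ |∑_{j=1}^N b_j| + √((∑_{j=1}^N b_j²)(∑_{j=1}^N (1 − a_j)²)). -/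
theorem stmt_10 (N : ℕ) (a b : Fin N → ℝ) (ha : ∀ j, a j ∈ Set.Ioc (0:ℝ) 1) :
    (∏ j, a j) * |∑ j, b j / a j| ≤
      |∑ j, b j| + Real.sqrt ((∑ j, (b j) ^ 2) * ∑ j, (1 - a j) ^ 2) := by
  have ha0 : ∀ j, 0 < a j := fun j => (ha j).1
  have ha1 : ∀ j, a j ≤ 1 := fun j => (ha j).2
  set P := ∏ j, a j with hP
  have hP0 : 0 ≤ P := Finset.prod_nonneg fun j _ => (ha0 j).le
  have hP1 : P ≤ 1 := Finset.prod_le_one (fun j _ => (ha0 j).le) (fun j _ => ha1 j)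
  have hPa : ∀ j, P ≤ a j := by
    intro j
    calc P = a j * ∏ i ∈ Finset.univ.erase j, a i :=
          (Finset.mul_prod_erase _ _ (Finset.mem_univ j)).symm
      _ ≤ a j * 1 := by
          gcongr
          · exact (ha0 j).le
          · exact Finset.prod_le_one (fun i _ => (ha0 i).le) (fun i _ => ha1 i)
      _ = a j := mul_one _
  have hsplit : (∑ j, b j / a j) = (∑ j, b j) + ∑ j, b j * (1 - a j) / a j := by
    rw [← Finset.sum_add_distrib]
    apply Finset.sum_congr rfl
    intro j _
    have hj := (ha0 j).ne'
    field_simp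
    ring
  have key : P * |∑ j, b j * (1 - a j) / a j| ≤ ∑ j, |b j| * (1 - a j) := by
    calc P * |∑ j, b j * (1 - a j) / a j| ≤ P * ∑ j, |b j * (1 - a j) / a j| := by
          gcongr
          exact Finset.abs_sum_le_sum_abs _ _
      _ = ∑ j, P * |b j * (1 - a j) / a j| := Finset.mul_sum _ _ _
      _ ≤ ∑ j, |b j| * (1 - a j) := by
          apply Finset.sum_le_sum
          intro j _
          have h1 : |b j * (1 - a j) / a j| = |b j| * (1 - a j) / a j := by
            rw [abs_div, abs_mul, abs_of_pos (ha0 j),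
              abs_of_nonneg (by linarith [ha1 j] : (0:ℝ) ≤ 1 - a j)]
          rw [h1, mul_div_assoc', div_le_iff₀ (ha0 j)]
          have hb : 0 ≤ |b j| * (1 - a j) := by
            have := abs_nonneg (b j); nlinarith [ha1 j]
          nlinarith [hPa j]
  have cs : (∑ j, |b j| * (1 - a j)) ≤
      Real.sqrt ((∑ j, (b j) ^ 2) * ∑ j, (1 - a j) ^ 2) := by
    have hnn : 0 ≤ ∑ j, |b j| * (1 - a j) := by
      apply Finset.sum_nonneg
      intro j _
      have := abs_nonneg (b j); nlinarith [ha1 j]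
    rw [Real.le_sqrt hnn, ← sq_abs (∑ j, |b j| * (1 - a j)), abs_of_nonneg hnn] <;>
      [skip; positivity]
    calc (∑ j, |b j| * (1 - a j)) ^ 2 ≤ (∑ j, |b j| ^ 2) * ∑ j, (1 - a j) ^ 2 := by
          exact Finset.sum_mul_sq_le_sq_mul_sq _ _ _
      _ = (∑ j, (b j) ^ 2) * ∑ j, (1 - a j) ^ 2 := by
          congr 1
          exact Finset.sum_congr rfl fun j _ => sq_abs (b j)
  calc P * |∑ j, b j / a j|
      = P * |(∑ j, b j) + ∑ j, b j * (1 - a j) / a j| := by rw [hsplit]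
    _ ≤ P * (|∑ j, b j| + |∑ j, b j * (1 - a j) / a j|) := by
        gcongr
        · exact abs_add_le _ _
    _ = P * |∑ j, b j| + P * |∑ j, b j * (1 - a j) / a j| := by ring
    _ ≤ 1 * |∑ j, b j| + ∑ j, |b j| * (1 - a j) := by
        gcongr
    _ ≤ |∑ j, b j| + Real.sqrt ((∑ j, (b j) ^ 2) * ∑ j, (1 - a j) ^ 2) := by
        rw [one_mul]
        gcongr
end
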